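/- arXiv:2511.14498 — 4 statements merged into one kernel-verified Lean document; each statement's English description precedes it below -/
import Mathlib

section
/- Theorem 1.10: Let A be a slender abelian group, i.e., for every additive group homomorphism h : (ℕ → ℤ) → A from the Baer–Specker group, the set {n ∈ ℕ | h(i_n) ≠ 0} is finite. Then A is a slender generalized group: for every map h : (ℕ → ℤ) → A satisfying h(x * y) = h(x) + h(y) for all x, y (where * is the generalized group operation of ∏_ℕ^g ℤ), the set {n ∈ ℕ | h(i_n) ≠ 0} is finite. -/
/-- The generalized group operation on `∏_ℕ^g ℤ`. -/
def gmul (x y : ℕ → ℤ) : ℕ → ℤ :=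
  fun n => if n % 3 = 1 then x n else if n % 3 = 2 then y n else x n + y n

/-- The local identity map `e` of `∏_ℕ^g ℤ`. -/
def ge (x : ℕ → ℤ) : ℕ → ℤ :=
  fun n => if n % 3 = 0 then 0 else x n

/-- `ind n` is the function that is `1` at `n` and `0` elsewhere. -/
def ind (n : ℕ) : ℕ → ℤ :=
  fun k => if k = n then 1 else 0

theorem slender_implies_generalized_slender {A : Type*} [AddCommGroup A]
    (hA : ∀ h : (ℕ → ℤ) →+ A, {n : ℕ | h (ind n) ≠ 0}.Finite) :
    ∀ h : (ℕ → ℤ) → A, (∀ x y : ℕ → ℤ, h (gmul x y) = h x + h y) →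
      {n : ℕ | h (ind n) ≠ 0}.Finite := by
  intro h hh
  have h0 : h 0 = 0 := by
    have e : gmul (0 : ℕ → ℤ) 0 = 0 := by
      funext n
      have : n % 3 = 0 ∨ n % 3 = 1 ∨ n % 3 = 2 := by omega
      rcases this with h3 | h3 | h3 <;> simp [gmul, h3]
    have := hh 0 0
    rw [e] at this
    exact (left_eq_add.mp this)
  -- h only depends on the residue-0 coordinates
  have hres : ∀ x : ℕ → ℤ, h (fun n => if n % 3 = 0 then x n else 0) = h x := by
    intro x
    have A1 : h (gmul x 0) = h x := by
      have := hh x 0; rw [this, h0, add_zero]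
    have A2 : gmul 0 (gmul x 0) = (fun n => if n % 3 = 0 then x n else 0) := by
      funext n
      have : n % 3 = 0 ∨ n % 3 = 1 ∨ n % 3 = 2 := by omega
      rcases this with h3 | h3 | h3 <;> simp [gmul, h3]
    calc h (fun n => if n % 3 = 0 then x n else 0)
        = h (gmul 0 (gmul x 0)) := by rw [A2]
      _ = h 0 + h (gmul x 0) := hh _ _
      _ = h x := by rw [h0, zero_add, A1]
  -- the additive hom obtained by embedding into residue-0 coordinates
  let φ : (ℕ → ℤ) → (ℕ → ℤ) := fun z k => if k % 3 = 0 then z (k / 3) else 0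
  have hφadd : ∀ z w : ℕ → ℤ, φ (z + w) = gmul (φ z) (φ w) := by
    intro z w
    funext k
    have : k % 3 = 0 ∨ k % 3 = 1 ∨ k % 3 = 2 := by omega
    rcases this with h3 | h3 | h3 <;> simp [gmul, φ, h3]
  let H : (ℕ → ℤ) →+ A := AddMonoidHom.mk' (fun z => h (φ z)) (by
    intro z w
    show h (φ (z + w)) = h (φ z) + h (φ w)
    rw [hφadd, hh])
  have hHind : ∀ m : ℕ, H (ind m) = h (ind (3 * m)) := by
    intro m
    have : φ (ind m) = ind (3 * m) := by
      funext k
      by_cases h3 : k % 3 = 0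
      · have : k / 3 = m ↔ k = 3 * m := by omega
        simp [φ, ind, h3, this]
      · have : k ≠ 3 * m := by omega
        simp [φ, ind, h3, this]
    show h (φ (ind m)) = _
    rw [this]
  have hsub : {n : ℕ | h (ind n) ≠ 0} ⊆ (fun m => 3 * m) '' {m : ℕ | H (ind m) ≠ 0} := by
    intro n hn
    have h3 : n % 3 = 0 := by
      by_contra h3
      apply hn
      have e0 : (fun k => if k % 3 = 0 then ind n k else 0) = (0 : ℕ → ℤ) := by
        funext k
        by_cases hk : k % 3 = 0
        · have : k ≠ n := by omega
          simp [ind, hk, this]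
        · simp [hk]
      have := hres (ind n)
      rw [e0] at this
      rw [← this, h0]
    refine ⟨n / 3, ?_, show 3 * (n / 3) = n by omega⟩
    have : 3 * (n / 3) = n := by omega
    simpa [Set.mem_setOf_eq, hHind, this] using hn
  exact Set.Finite.subset ((hA H).image _) hsub
end

section
/- Theorem 1.11: Let A be an abelian group such that for every map h : (ℕ → ℤ) → A satisfying h(x * y) = h(x) + h(y) for all x, y (where * is the generalized group operation of ∏_ℕ^g ℤ), the set {n ∈ ℕ | h(i_n) ≠ 0} is finite. Then A is a slender abelian group: for every additive group homomorphism h : (ℕ → ℤ) → A from the Baer–Specker group, the set {n ∈ ℕ | h(i_n) ≠ 0} is finite. -/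
theorem generalized_slender_implies_slender {A : Type*} [AddCommGroup A]
    (hA : ∀ h : (ℕ → ℤ) → A, (∀ x y : ℕ → ℤ, h (gmul x y) = h x + h y) →
      {n : ℕ | h (ind n) ≠ 0}.Finite) :
    ∀ h : (ℕ → ℤ) →+ A, {n : ℕ | h (ind n) ≠ 0}.Finite := by
  intro h
  have key : ∀ r : ℕ, r < 3 → ({m : ℕ | m % 3 = 0 ∧ h (ind (m + r)) ≠ 0}).Finite := by
    intro r hr
    have hadd : ∀ x y : ℕ → ℤ,
        (fun z : ℕ → ℤ => h (fun k => if k % 3 = r then z (k - r) else 0)) (gmul x y) =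
        (fun z : ℕ → ℤ => h (fun k => if k % 3 = r then z (k - r) else 0)) x +
        (fun z : ℕ → ℤ => h (fun k => if k % 3 = r then z (k - r) else 0)) y := by
      intro x y
      simp only
      rw [← map_add]
      congr 1
      funext k
      by_cases hk : k % 3 = r
      · have h0 : (k - r) % 3 = 0 := by omega
        have h1 : ¬ (k - r) % 3 = 1 := by omega
        have h2 : ¬ (k - r) % 3 = 2 := by omega
        simp [hk, gmul, h1, h2]
      · simp [hk]
    have hfin := hA (fun z : ℕ → ℤ => h (fun k => if k % 3 = r then z (k - r) else 0)) hadd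
    apply hfin.subset
    intro m hm
    obtain ⟨hm0, hm1⟩ := hm
    simp only [Set.mem_setOf_eq]
    have heq : (fun k => if k % 3 = r then ind m (k - r) else 0) = ind (m + r) := by
      funext k
      simp only [ind]
      split_ifs <;> omega
    rw [heq]
    exact hm1
  have f0 := key 0 (by norm_num)
  have f1 := key 1 (by norm_num)
  have f2 := key 2 (by norm_num)
  have hsub : {n : ℕ | h (ind n) ≠ 0} ⊆
      ((· + 0) '' {m : ℕ | m % 3 = 0 ∧ h (ind (m + 0)) ≠ 0}) ∪
      ((· + 1) '' {m : ℕ | m % 3 = 0 ∧ h (ind (m + 1)) ≠ 0}) ∪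
      ((· + 2) '' {m : ℕ | m % 3 = 0 ∧ h (ind (m + 2)) ≠ 0}) := by
    intro n hn
    have hr : n % 3 = 0 ∨ n % 3 = 1 ∨ n % 3 = 2 := by omega
    rcases hr with hr | hr | hr
    · exact Or.inl (Or.inl ⟨n, ⟨hr, by simpa using hn⟩, by simp⟩)
    · exact Or.inl (Or.inr ⟨n - 1, ⟨by omega, by
        have : n - 1 + 1 = n := by omega
        rw [this]; exact hn⟩, by simp; omega⟩)
    · exact Or.inr ⟨n - 2, ⟨by omega, by
        have : n - 2 + 2 = n := by omega
        rw [this]; exact hn⟩, by simp; omega⟩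
  exact Set.Finite.subset (((f0.image _).union (f1.image _)).union (f2.image _)) hsub
end

section
/- An abelian group A is slender if and only if for every map h : (ℕ → ℤ) → A satisfying h(x * y) = h(x) + h(y) for all x, y (where * is the generalized group operation of ∏_ℕ^g ℤ), the set {n ∈ ℕ | h(i_n) ≠ 0} is finite. (Combination of Theorems 1.10 and 1.11: for abelian groups, the classical and generalized notions of slenderness coincide.) -/
theorem slender_iff_generalized_slender {A : Type*} [AddCommGroup A] :
    (∀ h : (ℕ → ℤ) →+ A, {n : ℕ | h (ind n) ≠ 0}.Finite) ↔
    (∀ h : (ℕ → ℤ) → A, (∀ x y : ℕ → ℤ, h (gmul x y) = h x + h y) →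
      {n : ℕ | h (ind n) ≠ 0}.Finite) := by
  constructor
  · -- hard direction: classical slenderness implies generalized slenderness
    intro hs h hp
    -- h 0 = 0
    have h0 : h 0 = 0 := by
      have e : gmul 0 0 = (0 : ℕ → ℤ) := by
        funext n; simp [gmul]
      have := hp 0 0
      rw [e] at this
      exact add_eq_left.mp this.symm
    -- h vanishes on functions supported on positions ≢ 0 mod 3
    have hside : ∀ x : ℕ → ℤ, (∀ n, n % 3 = 0 → x n = 0) → h x = 0 := by
      intro x hx
      -- write x = gmul x1 x2 where x1, x2 are the parts on ≡1 and ≡2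
      set x1 : ℕ → ℤ := fun n => if n % 3 = 1 then x n else 0 with hx1
      set x2 : ℕ → ℤ := fun n => if n % 3 = 2 then x n else 0 with hx2
      have e1 : gmul 0 x1 = (0 : ℕ → ℤ) := by
        funext n
        simp only [gmul, hx1, Pi.zero_apply]
        split_ifs <;> simp_all <;> omega
      have e2 : gmul x2 0 = (0 : ℕ → ℤ) := by
        funext n
        simp only [gmul, hx2, Pi.zero_apply]
        split_ifs <;> simp_all <;> omega
      have hv1 : h x1 = 0 := by
        have := hp 0 x1; rw [e1, h0] at this
        simpa using this.symm
      have hv2 : h x2 = 0 := by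
        have := hp x2 0; rw [e2, h0] at this
        simpa using this.symm
      have e3 : gmul x1 x2 = x := by
        funext n
        simp only [gmul, hx1, hx2]
        split_ifs with h1 h2 <;> simp_all
        · exact (hx n (by omega)).symm
      have := hp x1 x2
      rw [e3, hv1, hv2] at this
      simpa using this
    -- h is additive on functions supported on positions ≡ 0 mod 3
    have hadd0 : ∀ x y : ℕ → ℤ, (∀ n, n % 3 ≠ 0 → x n = 0) →
        (∀ n, n % 3 ≠ 0 → y n = 0) → h (x + y) = h x + h y := by
      intro x y hx hy
      have e : gmul x y = x + y := by
        funext n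
        simp only [gmul, Pi.add_apply]
        split_ifs with h1 h2
        · rw [hx n (by omega), hy n (by omega)]; ring
        · rw [hx n (by omega), hy n (by omega)]; ring
        · rfl
      have := hp x y
      rwa [e] at this
    -- h x = h (P0 x)
    have hP0 : ∀ x : ℕ → ℤ, h x = h (fun n => if n % 3 = 0 then x n else 0) := by
      intro x
      set p : ℕ → ℤ := fun n => if n % 3 = 0 then x n else 0 with hpdef
      have hsupp : ∀ n, n % 3 ≠ 0 → p n = 0 := by
        intro n hn; simp [hpdef, hn]
      have hsuppneg : ∀ n, n % 3 ≠ 0 → (-p) n = 0 := by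
        intro n hn; simp [hpdef, hn]
      have hnegp : h (-p) = - h p := by
        have h1 := hadd0 p (-p) hsupp hsuppneg
        rw [show p + -p = 0 from by ring, h0] at h1
        have h2 := h1.symm
        rw [add_comm] at h2
        exact eq_neg_of_add_eq_zero_left h2
      have e : gmul x (-p) = (fun n => if n % 3 = 1 then x n else 0) := by
        funext n
        simp only [gmul, hpdef, Pi.neg_apply]
        by_cases h1 : n % 3 = 1
        · simp [h1]
        · by_cases h2 : n % 3 = 2
          · simp [h1, h2, show n % 3 ≠ 0 from by omega]
          · have h3 : n % 3 = 0 := by omega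
            simp [h1, h2, h3]
      have hq : h (fun n => if n % 3 = 1 then x n else 0) = 0 := by
        apply hside
        intro n hn; simp [show n % 3 ≠ 1 from by omega]
      have h2 := hp x (-p)
      rw [e, hq, hnegp] at h2
      have h3 := h2.symm
      rw [← sub_eq_add_neg, sub_eq_zero] at h3
      exact h3
    -- the induced additive homomorphism
    have hσadd : ∀ x y : ℕ → ℤ,
        h (fun n => if n % 3 = 0 then (x + y) (n / 3) else 0) =
        h (fun n => if n % 3 = 0 then x (n / 3) else 0) +
        h (fun n => if n % 3 = 0 then y (n / 3) else 0) := by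
      intro x y
      have e : (fun n => if n % 3 = 0 then (x + y) (n / 3) else 0) =
          (fun n => if n % 3 = 0 then x (n / 3) else 0) +
          (fun n => if n % 3 = 0 then y (n / 3) else 0) := by
        funext n
        simp only [Pi.add_apply]
        split_ifs <;> simp
      rw [e]
      exact hadd0 _ _ (fun n hn => by simp [hn]) (fun n hn => by simp [hn])
    set H : (ℕ → ℤ) →+ A :=
      { toFun := fun x => h (fun n => if n % 3 = 0 then x (n / 3) else 0)
        map_zero' := by
          have : (fun n => if n % 3 = 0 then (0 : ℕ → ℤ) (n / 3) else 0) = (0 : ℕ → ℤ) := by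
            funext n; simp
          simp only [this, h0]
        map_add' := hσadd } with hHdef
    have hfin := hs H
    have key : {n : ℕ | h (ind n) ≠ 0} ⊆ (fun k => 3 * k) '' {k : ℕ | H (ind k) ≠ 0} := by
      intro n hn
      simp only [Set.mem_setOf_eq] at hn
      by_cases h3 : n % 3 = 0
      · refine ⟨n / 3, ?_, show 3 * (n / 3) = n from by omega⟩
        simp only [Set.mem_setOf_eq, hHdef, AddMonoidHom.coe_mk, ZeroHom.coe_mk]
        have e : (fun m => if m % 3 = 0 then ind (n / 3) (m / 3) else 0) = ind n := by
          funext m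
          simp only [ind]
          split_ifs <;> first | rfl | omega
        rwa [e]
      · exfalso
        apply hn
        rw [hP0 (ind n)]
        have e : (fun m => if m % 3 = 0 then ind n m else 0) = (0 : ℕ → ℤ) := by
          funext m
          simp only [ind, Pi.zero_apply]
          split_ifs <;> first | rfl | omega
        rw [e, h0]
    exact Set.Finite.subset (hfin.image _) key
  · -- easy direction
    intro hg h
    have hprop : ∀ x y : ℕ → ℤ,
        (fun z : ℕ → ℤ => h (fun k => z (3 * k))) (gmul x y) =
        (fun z : ℕ → ℤ => h (fun k => z (3 * k))) x +
        (fun z : ℕ → ℤ => h (fun k => z (3 * k))) y := by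
      intro x y
      simp only
      rw [← map_add]
      congr 1
      funext k
      simp [gmul, Nat.mul_mod_right]
    have hfin := hg (fun z : ℕ → ℤ => h (fun k => z (3 * k))) hprop
    have key : {n : ℕ | h (ind n) ≠ 0} =
        (fun m => 3 * m) ⁻¹' {n : ℕ | h (fun k => ind n (3 * k)) ≠ 0} := by
      ext m
      simp only [Set.mem_preimage, Set.mem_setOf_eq]
      have e : (fun k => ind (3 * m) (3 * k)) = ind m := by
        funext k
        simp only [ind]
        split_ifs <;> first | rfl | omega
      rw [e]
    rw [key]
    exact hfin.preimage (Function.Injective.injOn (fun a b hab => by omega))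
end

section
/- Theorem 2.3 (abelian case): Let {A_α}_{α ∈ I} be a family of slender abelian groups. Then the direct sum ⨁_{α ∈ I} A_α is a slender abelian group. -/
/-!
Suppose `h : ℤ^ℕ → ⨁ A_α` has `h (ind m) ≠ 0` for infinitely many `m`. Each coordinate `α`
sees only finitely many of these, so one can pick `m_0 < m_1 < …` and distinct `α_0, α_1, …`
with `h (ind m_k)` nonzero at `α_k` and zero at `α_l` for `l < k`. A slender group only sees
finitely many coordinates of `ℤ^ℕ`, so `h (∑ c_k • ind m_k)` has `α_k`-coordinate
`∑_{j ≤ k} c_j • h (ind m_j) α_k`. This system is triangular with nonzero diagonal, so `c` can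
be chosen to make all of these nonzero: infinitely many nonzero coordinates in a direct sum.
-/

open Finset

def IsSlender (A : Type*) [AddCommGroup A] : Prop :=
  ∀ h : (ℕ → ℤ) →+ A, {n : ℕ | h (ind n) ≠ 0}.Finite

/-- `y ↦ ∑ₖ y k • x k`, truncated at coordinate `m` to `k ≤ m`: this is the genuine infinite sum
when each `x k` vanishes below `k`. -/
def seriesHom (x : ℕ → ℕ → ℤ) : (ℕ → ℤ) →+ (ℕ → ℤ) where
  toFun y m := ∑ k ∈ range (m + 1), y k * x k m
  map_zero' := by ext; simp
  map_add' y z := by ext; simp [add_mul, sum_add_distrib]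

lemma seriesHom_ind {x : ℕ → ℕ → ℤ} (hx : ∀ k m, m < k → x k m = 0) (k : ℕ) :
    seriesHom x (ind k) = x k := by
  ext m
  simp only [seriesHom, AddMonoidHom.coe_mk, ZeroHom.coe_mk, ind, ite_mul, one_mul, zero_mul,
    sum_ite_eq', mem_range]
  split_ifs with hkm
  · rfl
  · exact (hx k m (by omega)).symm

lemma sub_sum_smul_ind_apply_of_lt (x : ℕ → ℤ) {N m : ℕ} (hm : m < N) :
    (x - ∑ j ∈ range N, x j • ind j) m = 0 := by
  simp [Finset.sum_apply, ind, hm]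

section DiagonalCoefficients

variable {B : ℕ → Type*} [∀ k, AddCommGroup (B k)] (a : ∀ k, ℕ → B k)

open Classical in
noncomputable def diagCoeff (k : ℕ) : ℤ :=
  if ∑ j : Fin k, diagCoeff j • a k j = 0 then 1 else 0

open Classical in
lemma diagCoeff_eq (k : ℕ) :
    diagCoeff a k = if ∑ j ∈ range k, diagCoeff a j • a k j = 0 then 1 else 0 := by
  rw [diagCoeff, Fin.sum_univ_eq_sum_range (fun j => diagCoeff a j • a k j)]

lemma sum_diagCoeff_smul_ne_zero (ha : ∀ k, a k k ≠ 0) (k : ℕ) :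
    ∑ j ∈ range (k + 1), diagCoeff a j • a k j ≠ 0 := by
  classical
  rw [sum_range_succ, diagCoeff_eq a k]
  split_ifs with hs
  · simpa [hs] using ha k
  · simpa using hs

end DiagonalCoefficients

lemma exists_triangular_seq {I : Type*} (T : I → Set ℕ) (hT : ∀ i, (T i).Finite)
    (hU : (⋃ i, T i).Infinite) :
    ∃ (n : ℕ → ℕ) (i : ℕ → I), StrictMono n ∧ Function.Injective i ∧ (∀ k, n k ∈ T (i k)) ∧
      ∀ l k, l < k → n k ∉ T (i l) := by
  choose pick hpick_mem hpick_gt using hU.exists_gt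
  choose idx hidx using fun b => Set.mem_iUnion.1 (hpick_mem b)
  choose bnd hbnd using fun i => (hT i).bddAbove
  -- `n k := pick (b k)` lies beyond `T (i l)` for all `l < k`
  let b : ℕ → ℕ := fun k => (fun b' => max (pick b') (bnd (idx b')))^[k] 0
  have hb_succ (k : ℕ) : b (k + 1) = max (pick (b k)) (bnd (idx (b k))) :=
    Function.iterate_succ_apply' _ _ _
  have hpick_le (k : ℕ) : pick (b k) ≤ b (k + 1) := hb_succ k ▸ le_max_left _ _
  have hb_mono : StrictMono b :=
    strictMono_nat_of_lt_succ fun k => (hpick_gt (b k)).trans_le (hpick_le k)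
  have hnot (l k : ℕ) (hlk : l < k) : pick (b k) ∉ T (idx (b l)) := fun hmem =>
    lt_irrefl _ <| calc pick (b k) ≤ bnd (idx (b l)) := hbnd _ hmem
      _ ≤ b (l + 1) := hb_succ l ▸ le_max_right _ _
      _ ≤ b k := hb_mono.monotone hlk
      _ < pick (b k) := hpick_gt _
  refine ⟨fun k => pick (b k), fun k => idx (b k),
    strictMono_nat_of_lt_succ fun k => (hpick_le k).trans_lt (hpick_gt _),
    fun k l (hkl : idx (b k) = idx (b l)) => ?_, fun k => hidx (b k), hnot⟩
  by_contra hne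
  rcases lt_or_gt_of_ne hne with hlt | hlt
  · exact hnot k l hlt (hkl ▸ hidx (b l))
  · exact hnot l k hlt (hkl ▸ hidx (b k))

namespace IsSlender

section

variable {A : Type*} [AddCommGroup A]

lemma exists_forall_eq_zero_of_forall_lt (hA : IsSlender A) (h : (ℕ → ℤ) →+ A) :
    ∃ N, ∀ x : ℕ → ℤ, (∀ m < N, x m = 0) → h x = 0 := by
  by_contra! hx
  choose x hx_lt hx_ne using hx
  have hφ := seriesHom_ind (x := x) hx_lt
  have hfin := hA (h.comp (seriesHom x))
  simp only [AddMonoidHom.coe_comp, Function.comp_apply, hφ, ne_eq, hx_ne, not_false_eq_true,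
    Set.ofPred_true] at hfin
  exact Set.infinite_univ hfin

lemma eq_sum_smul (hA : IsSlender A) (h : (ℕ → ℤ) →+ A) {K : ℕ}
    (hK : ∀ j, K ≤ j → h (ind j) = 0) (x : ℕ → ℤ) :
    h x = ∑ j ∈ range K, x j • h (ind j) := by
  obtain ⟨N, hN⟩ := hA.exists_forall_eq_zero_of_forall_lt h
  have htail : h (x - ∑ j ∈ range (max N K), x j • ind j) = 0 :=
    hN _ fun m hm => sub_sum_smul_ind_apply_of_lt x (lt_max_of_lt_left hm)
  rw [map_sub, map_sum, sub_eq_zero] at htail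
  rw [htail, ← sum_subset (range_subset_range.2 (le_max_right N K))]
  · exact sum_congr rfl fun j _ => map_zsmul h _ _
  · intro j _ hj
    rw [map_zsmul, hK j (by simpa using hj), smul_zero]

end

theorem directSum {I : Type*} {A : I → Type*} [∀ i, AddCommGroup (A i)]
    (hA : ∀ i, IsSlender (A i)) : IsSlender (DirectSum I A) := by
  intro h
  by_contra hinf
  let T (i : I) : Set ℕ := {m | h (ind m) i ≠ 0}
  have hT (i : I) : (T i).Finite := hA i ((DFinsupp.evalAddMonoidHom i).comp h)
  have hU : (⋃ i, T i).Infinite := Set.Infinite.mono (fun m (hm : h (ind m) ≠ 0) =>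
    Set.mem_iUnion.2 (not_forall.1 fun h0 => hm (DFinsupp.ext h0))) hinf
  obtain ⟨n, i, hn, hi, hdiag, hzero⟩ := exists_triangular_seq T hT hU
  let a (k j : ℕ) : A (i k) := h (ind (n j)) (i k)
  let φ := seriesHom fun k => ind (n k)
  have hφ (j : ℕ) : φ (ind j) = ind (n j) :=
    seriesHom_ind (fun k m hm => if_neg (hm.trans_le hn.le_apply).ne) j
  let v := h (φ (diagCoeff a))
  have hv (k : ℕ) : v (i k) ≠ 0 := by
    let g := (DFinsupp.evalAddMonoidHom (i k)).comp (h.comp φ)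
    have hg (j : ℕ) : g (ind j) = a k j := congrArg (fun w => h w (i k)) (hφ j)
    have hK (j : ℕ) (hj : k + 1 ≤ j) : g (ind j) = 0 := by
      simpa [hg, a, T] using hzero k j hj
    rw [show v (i k) = g (diagCoeff a) from rfl, (hA (i k)).eq_sum_smul g hK]
    simpa only [hg] using sum_diagCoeff_smul_ne_zero a hdiag k
  exact Set.infinite_of_injective_forall_mem hi hv (DFinsupp.finite_support v)

end IsSlender

theorem directSum_slender {I : Type*} (A : I → Type*) [∀ i, AddCommGroup (A i)]
    (hA : ∀ i, ∀ h : (ℕ → ℤ) →+ A i, {n : ℕ | h (ind n) ≠ 0}.Finite) :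
    ∀ h : (ℕ → ℤ) →+ DirectSum I A, {n : ℕ | h (ind n) ≠ 0}.Finite :=
  IsSlender.directSum hA
end
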